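/- Let U > 0, Z ≥ 0, B ≥ 0, δ ≥ 0, ζ ≥ 0, η ≥ 0, and 0 ≤ P̄ ≤ P_max be real numbers, define φ(H,V,D) = U‖HV − D‖_F² + Z‖V‖_F², S = (1/2)·max{(P_max − P̄)², P̄²}, and φ̄ = 2·[(2+δ)(P_max + ζη) + 2(ζ(1+δ) + η)·√P_max]·B²·δ. Let H, Ĥ be K×N complex matrices, D, D̂ K×K complex matrices, and V*, V^opt N×K complex matrices satisfying ‖H‖_F ≤ B, ‖H − Ĥ‖_F ≤ Bδ, ‖D‖_F ≤ ζB, ‖D̂‖_F ≤ ζB(1+δ), ‖D − D̂‖_F ≤ ηBδ, ‖V*‖_F² ≤ P_max, ‖V^opt‖_F² ≤ P_max, and φ(Ĥ, V*, D̂) ≤ φ(Ĥ, V^opt, D̂). Let Z⁺ = max{Z + ‖V*‖_F² − P̄, 0}. Then (1/2)(Z⁺² − Z²) + U·‖H V* − D‖_F² ≤ U·‖H V^opt − D‖_F² + Z·(‖V^opt‖_F² − P̄) + U·φ̄ + S. -/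

import Mathlib

open Matrix

/-- Frobenius norm of a complex matrix. -/
noncomputable def frobNorm {m n : Type*} [Fintype m] [Fintype n]
    (A : Matrix m n ℂ) : ℝ :=
  Real.sqrt (∑ i, ∑ j, ‖A i j‖ ^ 2)

/-- The per-slot objective φ(H, V, D) = U‖HV − D‖_F² + Z‖V‖_F². -/
noncomputable def phi {K N K' : ℕ} (U Z : ℝ)
    (H : Matrix (Fin K) (Fin N) ℂ) (V : Matrix (Fin N) (Fin K') ℂ)
    (D : Matrix (Fin K) (Fin K') ℂ) : ℝ :=
  U * frobNorm (H * V - D) ^ 2 + Z * frobNorm V ^ 2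

open scoped InnerProductSpace

/-! The drift of the virtual queue is controlled through `max a 0 ^ 2 ≤ a ^ 2`, and
`(‖V*‖² - P̄)² ≤ 2S` because `‖V*‖²` lies in `[0, P_max]`. Optimality of `V*` for the
estimated objective `φ(Ĥ, ·, D̂)` then trades the true residual of `V*` for that of `V^opt`,
up to the estimation gap `(‖HV₁ - D‖² - ‖HV₂ - D‖²) - (‖ĤV₁ - D̂‖² - ‖ĤV₂ - D̂‖²)`.
Writing `‖HV₁ - D‖² - ‖HV₂ - D‖² = ⟪H(V₁ + V₂) - 2D, H(V₁ - V₂)⟫` for the real Frobenius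
inner product, the gap splits into four inner products, each small by Cauchy–Schwarz and
submultiplicativity of the Frobenius norm. -/

theorem max_zero_sq_sub_sq_le (Z y : ℝ) : max (Z + y) 0 ^ 2 - Z ^ 2 ≤ 2 * Z * y + y ^ 2 := by
  have : max (Z + y) 0 ^ 2 ≤ (Z + y) ^ 2 := by
    rcases le_total (Z + y) 0 with h | h
    · simp [max_eq_right h, sq_nonneg]
    · rw [max_eq_left h]
  linarith

theorem sq_sub_le_max_of_mem_Icc {a b c x : ℝ} (hx : x ∈ Set.Icc a b) :
    (x - c) ^ 2 ≤ max ((b - c) ^ 2) ((a - c) ^ 2) := by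
  rcases le_total c x with h | h
  · exact le_max_of_le_left (by nlinarith [hx.2])
  · exact le_max_of_le_right (by nlinarith [hx.1])

section RealInnerProductSpace

variable {E : Type*} [SeminormedAddCommGroup E] [InnerProductSpace ℝ E]

theorem norm_sq_sub_norm_sq_eq_inner (x y : E) : ‖x‖ ^ 2 - ‖y‖ ^ 2 = ⟪x + y, x - y⟫_ℝ := by
  rw [inner_add_left, inner_sub_right, inner_sub_right, real_inner_self_eq_norm_sq,
    real_inner_self_eq_norm_sq, real_inner_comm x y]
  ring

theorem norm_add_mul_norm_sub_le (x y : E) : ‖x + y‖ * ‖x - y‖ ≤ ‖x‖ ^ 2 + ‖y‖ ^ 2 := by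
  nlinarith [parallelogram_law_with_norm ℝ x y, sq_nonneg (‖x + y‖ - ‖x - y‖)]

end RealInnerProductSpace

section FrobeniusInner

variable {𝕜 : Type*} [RCLike 𝕜] {l m n : Type*} [Fintype l] [Fintype m] [Fintype n]

attribute [local instance] Matrix.frobeniusNormedAddCommGroup Matrix.frobeniusNormedSpace

noncomputable abbrev Matrix.frobeniusRealInnerProductSpace :
    InnerProductSpace ℝ (Matrix m n 𝕜) where
  inner A B :=
    ⟪WithLp.toLp 2 fun i ↦ WithLp.toLp 2 (A i), WithLp.toLp 2 fun i ↦ WithLp.toLp 2 (B i)⟫_ℝ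
  norm_sq_eq_re_inner A :=
    norm_sq_eq_re_inner (𝕜 := ℝ) (WithLp.toLp 2 fun i ↦ WithLp.toLp 2 (A i))
  conj_inner_symm _ _ := inner_conj_symm (𝕜 := ℝ) _ _
  add_left A B _ := inner_add_left (𝕜 := ℝ) (WithLp.toLp 2 fun i ↦ WithLp.toLp 2 (A i))
    (WithLp.toLp 2 fun i ↦ WithLp.toLp 2 (B i)) _
  smul_left A _ r := inner_smul_left (𝕜 := ℝ) (WithLp.toLp 2 fun i ↦ WithLp.toLp 2 (A i)) _ r

attribute [local instance] Matrix.frobeniusRealInnerProductSpace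

theorem frobNorm_eq_norm (A : Matrix m n ℂ) : frobNorm A = ‖A‖ := by
  rw [frobenius_norm_def, frobNorm, Real.sqrt_eq_rpow]
  norm_num [Real.rpow_two]

theorem norm_mul_sub_sq_sub_norm_mul_sub_sq (H : Matrix l m 𝕜) (D : Matrix l n 𝕜)
    (V₁ V₂ : Matrix m n 𝕜) :
    ‖H * V₁ - D‖ ^ 2 - ‖H * V₂ - D‖ ^ 2 = ⟪H * (V₁ + V₂) - 2 • D, H * (V₁ - V₂)⟫_ℝ := by
  rw [norm_sq_sub_norm_sq_eq_inner, Matrix.mul_add, Matrix.mul_sub, two_nsmul]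
  congr 1 <;> abel

theorem residual_gap_eq (H Hhat : Matrix l m 𝕜) (D Dhat : Matrix l n 𝕜) (V₁ V₂ : Matrix m n 𝕜) :
    (‖H * V₁ - D‖ ^ 2 - ‖H * V₂ - D‖ ^ 2) - (‖Hhat * V₁ - Dhat‖ ^ 2 - ‖Hhat * V₂ - Dhat‖ ^ 2) =
      ⟪(H - Hhat) * (V₁ + V₂), H * (V₁ - V₂)⟫_ℝ + ⟪Hhat * (V₁ + V₂), (H - Hhat) * (V₁ - V₂)⟫_ℝ
        - 2 * ⟪D - Dhat, H * (V₁ - V₂)⟫_ℝ - 2 * ⟪Dhat, (H - Hhat) * (V₁ - V₂)⟫_ℝ := by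
  simp only [norm_mul_sub_sq_sub_norm_mul_sub_sq, Matrix.sub_mul, inner_sub_left,
    inner_sub_right, two_nsmul, inner_add_left]
  ring

theorem residual_gap_le (H Hhat : Matrix l m 𝕜) (D Dhat : Matrix l n 𝕜) (V₁ V₂ : Matrix m n 𝕜) :
    (‖H * V₁ - D‖ ^ 2 - ‖H * V₂ - D‖ ^ 2) - (‖Hhat * V₁ - Dhat‖ ^ 2 - ‖Hhat * V₂ - Dhat‖ ^ 2) ≤
      ‖H - Hhat‖ * (‖H‖ + ‖Hhat‖) * (‖V₁ + V₂‖ * ‖V₁ - V₂‖) +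
        2 * (‖D - Dhat‖ * ‖H‖ + ‖Dhat‖ * ‖H - Hhat‖) * ‖V₁ - V₂‖ := by
  set S := V₁ + V₂
  set W := V₁ - V₂
  have hES := (real_inner_le_norm _ _).trans <| mul_le_mul (frobenius_norm_mul (H - Hhat) S)
    (frobenius_norm_mul H W) (norm_nonneg _) (by positivity)
  have hHhatS := (real_inner_le_norm _ _).trans <| mul_le_mul (frobenius_norm_mul Hhat S)
    (frobenius_norm_mul (H - Hhat) W) (norm_nonneg _) (by positivity)
  have hDW := (neg_le_abs _).trans <| (abs_real_inner_le_norm (D - Dhat) (H * W)).trans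
    (mul_le_mul_of_nonneg_left (frobenius_norm_mul H W) (norm_nonneg _))
  have hDhatW := (neg_le_abs _).trans <| (abs_real_inner_le_norm Dhat ((H - Hhat) * W)).trans
    (mul_le_mul_of_nonneg_left (frobenius_norm_mul (H - Hhat) W) (norm_nonneg _))
  rw [residual_gap_eq]
  linarith

theorem residual_gap_le_of_bounds {B δ ζ η P : ℝ} (hB : 0 ≤ B) (hδ : 0 ≤ δ) (hζ : 0 ≤ ζ)
    (hη : 0 ≤ η) {H Hhat : Matrix l m 𝕜} {D Dhat : Matrix l n 𝕜} {V₁ V₂ : Matrix m n 𝕜}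
    (hH : ‖H‖ ≤ B) (hHH : ‖H - Hhat‖ ≤ B * δ) (hDhat : ‖Dhat‖ ≤ ζ * B * (1 + δ))
    (hDD : ‖D - Dhat‖ ≤ η * B * δ) (hV₁ : ‖V₁‖ ^ 2 ≤ P) (hV₂ : ‖V₂‖ ^ 2 ≤ P) :
    (‖H * V₁ - D‖ ^ 2 - ‖H * V₂ - D‖ ^ 2) - (‖Hhat * V₁ - Dhat‖ ^ 2 - ‖Hhat * V₂ - Dhat‖ ^ 2) ≤
      2 * ((2 + δ) * (P + ζ * η) + 2 * (ζ * (1 + δ) + η) * √P) * B ^ 2 * δ := by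
  have hHhat : ‖Hhat‖ ≤ B * (1 + δ) := by linarith [norm_le_norm_add_norm_sub H Hhat]
  have hSW : ‖V₁ + V₂‖ * ‖V₁ - V₂‖ ≤ 2 * P := by linarith [norm_add_mul_norm_sub_le V₁ V₂]
  have hW : ‖V₁ - V₂‖ ≤ 2 * √P := by
    linarith [norm_sub_le V₁ V₂, Real.le_sqrt_of_sq_le hV₁, Real.le_sqrt_of_sq_le hV₂]
  have hslack : 0 ≤ 2 * (2 + δ) * (ζ * η) * B ^ 2 * δ := by positivity
  calc _ ≤ ‖H - Hhat‖ * (‖H‖ + ‖Hhat‖) * (‖V₁ + V₂‖ * ‖V₁ - V₂‖) +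
        2 * (‖D - Dhat‖ * ‖H‖ + ‖Dhat‖ * ‖H - Hhat‖) * ‖V₁ - V₂‖ := residual_gap_le ..
    _ ≤ B * δ * (B + B * (1 + δ)) * (2 * P) +
        2 * (η * B * δ * B + ζ * B * (1 + δ) * (B * δ)) * (2 * √P) := by
      gcongr
    _ ≤ _ := by linarith

end FrobeniusInner

theorem drift_plus_penalty_optimality_bound_general {K N : ℕ}
    (U Z B δ ζ η Pbar Pmax : ℝ)
    (hU : 0 < U) (hB : 0 ≤ B) (hδ : 0 ≤ δ) (hζ : 0 ≤ ζ) (hη : 0 ≤ η)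
    (H Hhat : Matrix (Fin K) (Fin N) ℂ) (D Dhat : Matrix (Fin K) (Fin K) ℂ)
    (Vstar Vopt : Matrix (Fin N) (Fin K) ℂ)
    (hH : frobNorm H ≤ B) (hHH : frobNorm (H - Hhat) ≤ B * δ)
    (hDhat : frobNorm Dhat ≤ ζ * B * (1 + δ)) (hDD : frobNorm (D - Dhat) ≤ η * B * δ)
    (hVs : frobNorm Vstar ^ 2 ≤ Pmax) (hVo : frobNorm Vopt ^ 2 ≤ Pmax)
    (hopt : phi U Z Hhat Vstar Dhat ≤ phi U Z Hhat Vopt Dhat) :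
    (1 / 2) * ((max (Z + frobNorm Vstar ^ 2 - Pbar) 0) ^ 2 - Z ^ 2) +
        U * frobNorm (H * Vstar - D) ^ 2 ≤
      U * frobNorm (H * Vopt - D) ^ 2 + Z * (frobNorm Vopt ^ 2 - Pbar) +
        U * (2 * ((2 + δ) * (Pmax + ζ * η) +
          2 * (ζ * (1 + δ) + η) * Real.sqrt Pmax) * B ^ 2 * δ) +
        (1 / 2) * max ((Pmax - Pbar) ^ 2) (Pbar ^ 2) := by
  have drift := max_zero_sq_sub_sq_le Z (frobNorm Vstar ^ 2 - Pbar)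
  have deviation := sq_sub_le_max_of_mem_Icc (c := Pbar) ⟨sq_nonneg (frobNorm Vstar), hVs⟩
  rw [zero_sub, neg_sq] at deviation
  simp only [phi, frobNorm_eq_norm] at *
  have gap := mul_le_mul_of_nonneg_left
    (residual_gap_le_of_bounds hB hδ hζ hη hH hHH hDhat hDD hVs hVo) hU.le
  rw [add_sub_assoc]
  linarith

/-- The deterministic inequality (eq. lm5-2) at the heart of Lemma 5,
combining the Lyapunov drift bound of Lemma 1 with the optimality-gap
bound of Lemma 4. -/
theorem drift_plus_penalty_optimality_bound {K N : ℕ}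
    (U Z B δ ζ η Pbar Pmax : ℝ)
    (hU : 0 < U) (hZ : 0 ≤ Z) (hB : 0 ≤ B) (hδ : 0 ≤ δ) (hζ : 0 ≤ ζ)
    (hη : 0 ≤ η) (hPbar : 0 ≤ Pbar) (hPP : Pbar ≤ Pmax)
    (H Hhat : Matrix (Fin K) (Fin N) ℂ) (D Dhat : Matrix (Fin K) (Fin K) ℂ)
    (Vstar Vopt : Matrix (Fin N) (Fin K) ℂ)
    (hH : frobNorm H ≤ B) (hHH : frobNorm (H - Hhat) ≤ B * δ)
    (hD : frobNorm D ≤ ζ * B) (hDhat : frobNorm Dhat ≤ ζ * B * (1 + δ))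
    (hDD : frobNorm (D - Dhat) ≤ η * B * δ)
    (hVs : frobNorm Vstar ^ 2 ≤ Pmax) (hVo : frobNorm Vopt ^ 2 ≤ Pmax)
    (hopt : phi U Z Hhat Vstar Dhat ≤ phi U Z Hhat Vopt Dhat) :
    (1 / 2) * ((max (Z + frobNorm Vstar ^ 2 - Pbar) 0) ^ 2 - Z ^ 2) +
        U * frobNorm (H * Vstar - D) ^ 2 ≤
      U * frobNorm (H * Vopt - D) ^ 2 + Z * (frobNorm Vopt ^ 2 - Pbar) +
        U * (2 * ((2 + δ) * (Pmax + ζ * η) +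
          2 * (ζ * (1 + δ) + η) * Real.sqrt Pmax) * B ^ 2 * δ) +
        (1 / 2) * max ((Pmax - Pbar) ^ 2) (Pbar ^ 2) :=
  drift_plus_penalty_optimality_bound_general U Z B δ ζ η Pbar Pmax hU hB hδ hζ hη H Hhat D Dhat
    Vstar Vopt hH hHH hDhat hDD hVs hVo hopt
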